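/- Let s, κ ∈ ℂ and let σ, σ̃ : ℝ → ℂ be differentiable functions. Suppose R : ℝ → Matrix (Fin 3) (Fin 3) ℂ is differentiable, R(x) is unit lower triangular for every x, and R'(x) + R(x)·F(σ̃)(x) = F(σ)(x)·R(x) for all x ∈ ℝ. Set σ̂ = σ − σ̃. Then for all x ∈ ℝ the (3,1) entry of R satisfies both R₃₁(x) = (s+κ)σ̂'(x) + (1/2)(s²−κ²)σ̂(x)² and R₃₁(x) = −(s−κ)σ̂'(x) + (1/2)(s²−κ²)σ̂(x)². -/

import Mathlib

/-!
Since `R` is unit lower triangular, `R'` vanishes on and above the diagonal. The diagonal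
entries `(1,1)` and `(2,2)` of `R' + R F(σ̃) = F(σ) R` then give `R₂₁ = (s+κ)σ̂` and
`R₃₂ = (s−κ)σ̂`, and the entries `(2,1)` and `(3,2)` express `R₃₁` through `R₂₁'` and `R₃₂'`.
-/

/-- The matrix F(σ) associated with the differential expression
ℓ_{σ,s,κ}(y) = y''' + s(σ'y)' + sσ'y' + κσ''y. -/
noncomputable def Fmat (s κ : ℂ) (σ : ℝ → ℂ) (x : ℝ) : Matrix (Fin 3) (Fin 3) ℂ :=
  !![ -(s + κ) * σ x, 1, 0;
      -(3 * κ ^ 2 / 2 + s ^ 2 / 2 + 2 * κ * s) * σ x ^ 2, 2 * κ * σ x, 1;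
      κ * (κ ^ 2 - s ^ 2) * σ x ^ 3,
        -(3 * κ ^ 2 / 2 + s ^ 2 / 2 - 2 * κ * s) * σ x ^ 2, (s - κ) * σ x ]

def UnitLowerTriangular (A : Matrix (Fin 3) (Fin 3) ℂ) : Prop :=
  (∀ i, A i i = 1) ∧ ∀ i j : Fin 3, i < j → A i j = 0

theorem UnitLowerTriangular.exists_eq {A : Matrix (Fin 3) (Fin 3) ℂ}
    (hA : UnitLowerTriangular A) : ∃ a b c, A = !![1, 0, 0; a, 1, 0; b, c, 1] := by
  refine ⟨A 1 0, A 2 0, A 2 1, ?_⟩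
  rw [Matrix.eta_fin_three A]
  simp [hA.1, hA.2 0 1 (by decide), hA.2 0 2 (by decide), hA.2 1 2 (by decide)]

theorem exists_eq_of_apply_eq_zero_of_le {A : Matrix (Fin 3) (Fin 3) ℂ}
    (hA : ∀ i j, i ≤ j → A i j = 0) : ∃ a b c, A = !![0, 0, 0; a, 0, 0; b, c, 0] := by
  refine ⟨A 1 0, A 2 0, A 2 1, ?_⟩
  rw [Matrix.eta_fin_three A]
  simp [hA _ _ le_rfl, hA 0 1 (by decide), hA 0 2 (by decide), hA 1 2 (by decide)]

theorem entries_of_gauge_eq {s κ : ℂ} {σ τ : ℝ → ℂ} {x : ℝ} {A A' : Matrix (Fin 3) (Fin 3) ℂ}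
    (hA : UnitLowerTriangular A) (hA' : ∀ i j, i ≤ j → A' i j = 0)
    (h : A' + A * Fmat s κ τ x = Fmat s κ σ x * A) :
    A 1 0 = (s + κ) * (σ x - τ x) ∧ A 2 1 = (s - κ) * (σ x - τ x)
      ∧ A 2 0 = A' 1 0 + (1 / 2) * (s ^ 2 - κ ^ 2) * (σ x - τ x) ^ 2
      ∧ A 2 0 = -A' 2 1 + (1 / 2) * (s ^ 2 - κ ^ 2) * (σ x - τ x) ^ 2 := by
  obtain ⟨a, b, c, rfl⟩ := hA.exists_eq
  obtain ⟨a', b', c', rfl⟩ := exists_eq_of_apply_eq_zero_of_le hA'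
  have entry (i j : Fin 3) := congrFun (congrFun h i) j
  have h00 := entry 0 0
  have h11 := entry 1 1
  have h10 := entry 1 0
  have h21 := entry 2 1
  simp only [Fmat, Matrix.add_apply, Matrix.mul_apply, Fin.sum_univ_three, Matrix.of_apply,
    Matrix.cons_val', Matrix.cons_val_zero, Matrix.cons_val_one, Matrix.cons_val_two,
    Matrix.empty_val', Matrix.cons_val_fin_one, Matrix.tail_cons, Matrix.vecHead]
    at h00 h11 h10 h21
  have ha : a = (s + κ) * (σ x - τ x) := by linear_combination -h00
  have hc : c = (s - κ) * (σ x - τ x) := by linear_combination -h11 + ha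
  show a = _ ∧ c = _ ∧ b = a' + _ ∧ b = -c' + _
  refine ⟨ha, hc, ?_, ?_⟩
  · linear_combination -h10 - (2 * κ * σ x + (s + κ) * τ x) * ha
  · linear_combination h21 + ((s - κ) * σ x - 2 * κ * τ x) * hc

/-- Over a field, `deriv (c * g) = c * deriv g` holds for every `g`, differentiable or not. -/
theorem HasDerivAt.eq_const_mul_deriv {𝕜 𝕜' : Type*} [NontriviallyNormedField 𝕜]
    [NontriviallyNormedField 𝕜'] [NormedAlgebra 𝕜 𝕜'] {f g : 𝕜 → 𝕜'} {f' c : 𝕜'} {x : 𝕜}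
    (hf : HasDerivAt f f' x) (hfg : ∀ t, f t = c * g t) : f' = c * _root_.deriv g x := by
  rw [← hf.deriv, show f = fun t => c * g t from funext hfg, deriv_const_mul_field]

theorem apply_eq_zero_of_hasDerivAt_of_unitLowerTriangular {R R' : ℝ → Matrix (Fin 3) (Fin 3) ℂ}
    (hR : ∀ (x : ℝ) (i j : Fin 3), HasDerivAt (fun t => R t i j) (R' x i j) x)
    (hTri : ∀ x : ℝ, UnitLowerTriangular (R x)) (x : ℝ) (i j : Fin 3) (hij : i ≤ j) :
    R' x i j = 0 := by
  have hconst : (fun t => R t i j) = fun _ => if i = j then 1 else 0 := by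
    funext t
    rcases hij.lt_or_eq with hlt | rfl
    · simp [(hTri t).2 i j hlt, hlt.ne]
    · simp [(hTri t).1 i]
  exact (hR x i j).unique (hconst ▸ hasDerivAt_const x _)

theorem corner_entry_formulas_general (s κ : ℂ) (σ σtil : ℝ → ℂ)
    (R R' : ℝ → Matrix (Fin 3) (Fin 3) ℂ)
    (hR : ∀ (x : ℝ) (i j : Fin 3), HasDerivAt (fun t => R t i j) (R' x i j) x)
    (hTri : ∀ x : ℝ, UnitLowerTriangular (R x))
    (heq : ∀ x : ℝ, R' x + R x * Fmat s κ σtil x = Fmat s κ σ x * R x) :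
    ∀ x : ℝ,
      R x 2 0 = (s + κ) * deriv (fun t => σ t - σtil t) x
          + (1 / 2) * (s ^ 2 - κ ^ 2) * (σ x - σtil x) ^ 2
      ∧ R x 2 0 = -(s - κ) * deriv (fun t => σ t - σtil t) x
          + (1 / 2) * (s ^ 2 - κ ^ 2) * (σ x - σtil x) ^ 2 := by
  intro x
  have entries t := entries_of_gauge_eq (hTri t)
    (apply_eq_zero_of_hasDerivAt_of_unitLowerTriangular hR hTri t) (heq t)
  obtain ⟨-, -, hcorner₁, hcorner₂⟩ := entries x
  constructor
  · rw [hcorner₁, (hR x 1 0).eq_const_mul_deriv fun t => (entries t).1]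
  · rw [hcorner₂, (hR x 2 1).eq_const_mul_deriv fun t => (entries t).2.1]
    ring

/-- If R is a differentiable unit lower triangular matrix function satisfying
R' + R·F(σ̃) = F(σ)·R, with σ, σ̃ differentiable and σ̂ = σ − σ̃, then the (3,1)
entry of R satisfies both R₃₁ = (s+κ)σ̂' + (1/2)(s²−κ²)σ̂² and
R₃₁ = −(s−κ)σ̂' + (1/2)(s²−κ²)σ̂². -/
theorem corner_entry_formulas (s κ : ℂ) (σ σtil : ℝ → ℂ)
    (hσ : Differentiable ℝ σ) (hσtil : Differentiable ℝ σtil)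
    (R R' : ℝ → Matrix (Fin 3) (Fin 3) ℂ)
    (hR : ∀ (x : ℝ) (i j : Fin 3), HasDerivAt (fun t => R t i j) (R' x i j) x)
    (hTri : ∀ x : ℝ, UnitLowerTriangular (R x))
    (heq : ∀ x : ℝ, R' x + R x * Fmat s κ σtil x = Fmat s κ σ x * R x) :
    ∀ x : ℝ,
      R x 2 0 = (s + κ) * deriv (fun t => σ t - σtil t) x
          + (1 / 2) * (s ^ 2 - κ ^ 2) * (σ x - σtil x) ^ 2
      ∧ R x 2 0 = -(s - κ) * deriv (fun t => σ t - σtil t) x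
          + (1 / 2) * (s ^ 2 - κ ^ 2) * (σ x - σtil x) ^ 2 :=
  corner_entry_formulas_general s κ σ σtil R R' hR hTri heq
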